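/- arXiv:2010.08818 — 3 statements merged into one kernel-verified Lean document; each statement's English description precedes it below -/
import Mathlib

section
/- For u < 0 and real s < t, (1/π) ∫_{-∞}^{∞} e^{i(s-t)v}/(u + iv) dv = -2 e^{u(t-s)}; and for u > 0 and s > t, (1/π) ∫_{-∞}^{∞} e^{i(s-t)v}/(u + iv) dv = 2 e^{u(t-s)}; in all other cases with u ≠ 0 the integral is 0 (for s ≠ t). -/
open Complex Filter

/-!
For `u > 0` and `a ≠ 0`, the kernel `e^{iav}/(u+iv)` is not integrable, but it is the derivative
of `e^{iav}/(ia(u+iv))` plus `a⁻¹ e^{iav}/(u+iv)²`. Integrating by parts over `[-R, R]`, the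
boundary terms vanish as `R → ∞` and what remains is the absolutely convergent
`a⁻¹ ∫ e^{iav}/(u+iv)² dv`. Since `(u + 2πiw)⁻²` is the Fourier transform of `x₊ e^{-ux}`,
Fourier inversion evaluates this integral as `2π a₊ e^{-ua}`. The case `u < 0` reduces to
`u > 0` by the substitution `v ↦ -v`.
-/

open MeasureTheory Set intervalIntegral
open scoped FourierTransform Topology Real

section LaplaceTransform

variable {c : ℂ}

lemma integrableOn_Ioi_mul_cexp_neg_mul (hc : 0 < c.re) :
    IntegrableOn (fun x : ℝ => (x : ℂ) * cexp (-(c * x))) (Ioi 0) := by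
  have h := integrableOn_rpow_mul_exp_neg_mul_rpow (s := 1) (p := 1) (by norm_num) one_pos hc
  simp only [Real.rpow_one] at h
  refine h.congr' (by fun_prop) ?_
  filter_upwards [ae_restrict_mem measurableSet_Ioi] with x (hx : 0 < x)
  simp [norm_exp, abs_of_pos hx]

lemma tendsto_pow_mul_cexp_neg_mul_atTop (hc : 0 < c.re) (n : ℕ) :
    Tendsto (fun x : ℝ => (x : ℂ) ^ n * cexp (-(c * x))) atTop (𝓝 0) := by
  rw [tendsto_zero_iff_norm_tendsto_zero]
  refine (tendsto_rpow_mul_exp_neg_mul_atTop_nhds_zero n c.re hc).congr' ?_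
  filter_upwards [eventually_ge_atTop 0] with x hx
  simp [norm_exp, abs_of_nonneg hx]

lemma integral_Ioi_mul_cexp_neg_mul (hc : 0 < c.re) :
    ∫ x in Ioi (0 : ℝ), (x : ℂ) * cexp (-(c * x)) = (c ^ 2)⁻¹ := by
  have hc0 : c ≠ 0 := by rintro rfl; simp at hc
  have hderiv (z : ℂ) : HasDerivAt (fun x => -(x / c + (c ^ 2)⁻¹) * cexp (-(c * x)))
      (z * cexp (-(c * z))) z := by
    refine ((((hasDerivAt_id' z).div_const c).add_const (c ^ 2)⁻¹).fun_neg.mul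
      ((hasDerivAt_id' z).const_mul c).fun_neg.cexp).congr_deriv ?_
    field_simp
    ring
  have hlim : Tendsto (fun x : ℝ => -(x / c + (c ^ 2)⁻¹) * cexp (-(c * x))) atTop (𝓝 0) := by
    convert (((tendsto_pow_mul_cexp_neg_mul_atTop hc 1).const_mul c⁻¹).add
      ((tendsto_pow_mul_cexp_neg_mul_atTop hc 0).const_mul (c ^ 2)⁻¹)).neg using 2
    · simp only [pow_one, pow_zero]
      ring
    · simp
  simpa using integral_Ioi_of_hasDerivAt_of_tendsto' (fun x _ => (hderiv x).comp_ofReal)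
    (integrableOn_Ioi_mul_cexp_neg_mul hc) hlim

end LaplaceTransform

section CauchyKernel

variable {u : ℝ}

lemma ofReal_add_I_mul_ne_zero (hu : u ≠ 0) (v : ℝ) : (u : ℂ) + I * v ≠ 0 :=
  fun h => hu (by simpa using congrArg re h)

lemma integrable_inv_ofReal_add_I_mul_sq (hu : u ≠ 0) :
    Integrable (fun v : ℝ => (((u : ℂ) + I * v) ^ 2)⁻¹) := by
  refine ((integrable_inv_one_add_sq.comp_div hu).const_mul (u ^ 2)⁻¹).congr'
    ((Continuous.inv₀ (by fun_prop)
      fun v => pow_ne_zero 2 (ofReal_add_I_mul_ne_zero hu v)).aestronglyMeasurable) ?_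
  filter_upwards with v
  rw [norm_inv, norm_pow, Complex.sq_norm, mul_comm I, normSq_add_mul_I]
  simp only [norm_mul, norm_inv, norm_pow, Real.norm_eq_abs, sq_abs]
  rw [abs_of_pos (by positivity)]
  field_simp

lemma norm_cexp_I_mul_ofReal_mul (a v : ℝ) : ‖cexp (I * a * v)‖ = 1 := by
  rw [mul_assoc, ← ofReal_mul, norm_exp_I_mul_ofReal]

lemma integrable_cexp_mul_div_ofReal_add_I_mul_sq (hu : u ≠ 0) (a : ℝ) :
    Integrable (fun v : ℝ => cexp (I * a * v) / ((u : ℂ) + I * v) ^ 2) := by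
  simp_rw [div_eq_mul_inv]
  refine (integrable_inv_ofReal_add_I_mul_sq hu).bdd_mul (c := 1) (by fun_prop)
    (.of_forall fun v => ?_)
  rw [norm_cexp_I_mul_ofReal_mul]

noncomputable def rampExp (u x : ℝ) : ℂ := (max x 0 : ℝ) * cexp (-(u * x))

lemma rampExp_of_nonpos {x : ℝ} (hx : x ≤ 0) : rampExp u x = 0 := by
  simp [rampExp, max_eq_right hx]

lemma rampExp_of_nonneg {x : ℝ} (hx : 0 ≤ x) : rampExp u x = x * cexp (-(u * x)) := by
  simp [rampExp, max_eq_left hx]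

lemma fourier_rampExp (hu : 0 < u) (w : ℝ) :
    𝓕 (rampExp u) w = (((u : ℂ) + I * ↑(2 * π * w)) ^ 2)⁻¹ := by
  rw [Real.fourier_real_eq_integral_exp_smul, ← setIntegral_eq_integral_of_forall_compl_eq_zero
    (s := Ioi 0) fun x (hx : ¬0 < x) => by rw [rampExp_of_nonpos (not_lt.1 hx), smul_zero]]
  rw [← integral_Ioi_mul_cexp_neg_mul (by simpa using hu)]
  refine setIntegral_congr_fun measurableSet_Ioi fun x (hx : 0 < x) => ?_
  rw [rampExp_of_nonneg hx.le, smul_eq_mul, mul_left_comm, ← Complex.exp_add]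
  congr 2
  push_cast
  ring

lemma continuous_rampExp (u : ℝ) : Continuous (rampExp u) := by
  unfold rampExp
  fun_prop

lemma integrable_rampExp (hu : 0 < u) : Integrable (rampExp u) := by
  refine IntegrableOn.integrable_of_forall_notMem_eq_zero (s := Ioi 0) ?_
    fun x (hx : ¬0 < x) => rampExp_of_nonpos (not_lt.1 hx)
  refine (integrableOn_Ioi_mul_cexp_neg_mul (c := u) (by simpa using hu)).congr_fun
    (fun x (hx : 0 < x) => (rampExp_of_nonneg hx.le).symm) measurableSet_Ioi

lemma integral_cexp_mul_div_ofReal_add_I_mul_sq (hu : 0 < u) (a : ℝ) :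
    ∫ v : ℝ, cexp (I * a * v) / ((u : ℂ) + I * v) ^ 2 = 2 * π * rampExp u a := by
  have hF : 𝓕 (rampExp u) = fun w => (((u : ℂ) + I * ↑(2 * π * w)) ^ 2)⁻¹ :=
    funext (fourier_rampExp hu)
  have hFint : Integrable (𝓕 (rampExp u)) := by
    rw [hF]
    exact (integrable_inv_ofReal_add_I_mul_sq hu.ne').comp_mul_left' (by positivity)
  have hinv := (integrable_rampExp hu).fourierInv_fourier_eq hFint
    (continuous_rampExp u).continuousAt (v := a)
  have hscale := Measure.integral_comp_mul_left
    (fun v : ℝ => cexp (I * a * v) / ((u : ℂ) + I * v) ^ 2) (2 * π)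
  rw [abs_of_pos (by positivity), real_smul] at hscale
  calc ∫ v : ℝ, cexp (I * a * v) / ((u : ℂ) + I * v) ^ 2
      = 2 * π * ∫ w : ℝ, cexp (I * a * ↑(2 * π * w)) / ((u : ℂ) + I * ↑(2 * π * w)) ^ 2 := by
        rw [hscale, ← mul_assoc]
        push_cast
        field_simp
    _ = 2 * π * 𝓕⁻ (𝓕 (rampExp u)) a := by
        rw [Real.fourierInv_eq', hF]
        congr 1
        refine integral_congr_ae (.of_forall fun w => ?_)
        simp only [smul_eq_mul, div_eq_mul_inv, RCLike.inner_apply, conj_trivial]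
        congr 2
        push_cast
        ring
    _ = 2 * π * rampExp u a := by rw [hinv]

variable {a : ℝ}

lemma hasDerivAt_cexp_mul_div_ofReal_add_I_mul (hu : u ≠ 0) (ha : a ≠ 0) (v : ℝ) :
    HasDerivAt (fun v : ℝ => cexp (I * a * v) / (I * a * (u + I * v)))
      (cexp (I * a * v) / (u + I * v) - (a : ℂ)⁻¹ * (cexp (I * a * v) / (u + I * v) ^ 2)) v := by
  have hne := ofReal_add_I_mul_ne_zero hu v
  have ha' : (a : ℂ) ≠ 0 := ofReal_ne_zero.2 ha
  have hIa : I * a ≠ 0 := mul_ne_zero I_ne_zero ha'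
  refine (((hasDerivAt_id' (v : ℂ)).const_mul (I * a)).cexp.div
    (((hasDerivAt_id' (v : ℂ)).const_mul I).const_add (u : ℂ) |>.const_mul (I * a))
    (mul_ne_zero hIa hne)).comp_ofReal.congr_deriv ?_
  field_simp

lemma tendsto_cexp_mul_div_ofReal_add_I_mul_cocompact (ha : a ≠ 0) :
    Tendsto (fun v : ℝ => cexp (I * a * v) / (I * a * (u + I * v))) (cocompact ℝ) (𝓝 0) := by
  rw [tendsto_zero_iff_norm_tendsto_zero]
  have hgrow : Tendsto (fun v : ℝ => ‖I * a * ((u : ℂ) + I * v)‖) (cocompact ℝ) atTop := by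
    refine tendsto_atTop_mono (fun v => ?_)
      (tendsto_norm_cocompact_atTop.const_mul_atTop (abs_pos.2 ha))
    rw [norm_mul, norm_mul, norm_I, one_mul, norm_real, Real.norm_eq_abs, Real.norm_eq_abs]
    gcongr
    calc |v| = |((u : ℂ) + I * v).im| := by simp
      _ ≤ _ := abs_im_le_norm _
  refine (tendsto_inv_atTop_zero.comp hgrow).congr fun v => ?_
  rw [Function.comp_apply, norm_div, norm_cexp_I_mul_ofReal_mul, one_div]

lemma intervalIntegral_cexp_mul_div_ofReal_add_I_mul (hu : u ≠ 0) (ha : a ≠ 0) (x y : ℝ) :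
    ∫ v in x..y, cexp (I * a * v) / ((u : ℂ) + I * v)
      = cexp (I * a * y) / (I * a * (u + I * y)) - cexp (I * a * x) / (I * a * (u + I * x))
        + (a : ℂ)⁻¹ * ∫ v in x..y, cexp (I * a * v) / ((u : ℂ) + I * v) ^ 2 := by
  have hne := ofReal_add_I_mul_ne_zero hu
  have hM : Continuous fun v : ℝ => cexp (I * a * v) / ((u : ℂ) + I * v) :=
    .div (by fun_prop) (by fun_prop) hne
  have hS : Continuous fun v : ℝ => (a : ℂ)⁻¹ * (cexp (I * a * v) / ((u : ℂ) + I * v) ^ 2) :=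
    continuous_const.mul (.div (by fun_prop) (by fun_prop) fun v => pow_ne_zero 2 (hne v))
  rw [← integral_eq_sub_of_hasDerivAt
    (fun v _ => hasDerivAt_cexp_mul_div_ofReal_add_I_mul hu ha v)
    ((hM.sub hS).intervalIntegrable _ _), integral_sub (hM.intervalIntegrable _ _)
    (hS.intervalIntegrable _ _), intervalIntegral.integral_const_mul]
  ring

lemma tendsto_intervalIntegral_cexp_mul_div_ofReal_add_I_mul (hu : 0 < u) (ha : a ≠ 0) :
    Tendsto (fun R : ℝ => ∫ v in -R..R, cexp (I * a * v) / ((u : ℂ) + I * v)) atTop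
      (𝓝 (if 0 < a then 2 * π * Real.exp (-(u * a)) else 0)) := by
  set B := fun v : ℝ => cexp (I * a * v) / (I * a * (u + I * v))
  have hB : Tendsto B (cocompact ℝ) (𝓝 0) := tendsto_cexp_mul_div_ofReal_add_I_mul_cocompact ha
  have hbdry : Tendsto (fun R => B R - B (-R)) atTop (𝓝 0) := by
    have := (hB.comp (tendsto_id.mono_right atTop_le_cocompact)).sub
      (hB.comp (tendsto_neg_atTop_atBot.mono_right atBot_le_cocompact))
    rwa [sub_zero] at this
  have hsq := intervalIntegral_tendsto_integral
    (integrable_cexp_mul_div_ofReal_add_I_mul_sq hu.ne' a) tendsto_neg_atTop_atBot tendsto_id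
  rw [integral_cexp_mul_div_ofReal_add_I_mul_sq hu] at hsq
  convert hbdry.add (hsq.const_mul (a⁻¹ : ℂ)) using 1
  · funext R
    exact intervalIntegral_cexp_mul_div_ofReal_add_I_mul hu.ne' ha (-R) R
  · rcases ha.lt_or_gt with hneg | hpos
    · simp [hneg.not_gt, rampExp_of_nonpos hneg.le]
    · rw [if_pos hpos, rampExp_of_nonneg hpos.le, zero_add]
      congr 1
      push_cast
      field_simp [ofReal_ne_zero.2 hpos.ne']

end CauchyKernel

lemma intervalIntegral_cexp_mul_div_ofReal_add_I_mul_neg (u a R : ℝ) :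
    ∫ v in -R..R, cexp (I * a * v) / ((u : ℂ) + I * v)
      = -∫ v in -R..R, cexp (I * ↑(-a) * v) / (↑(-u) + I * v) := by
  rw [← intervalIntegral.integral_neg, ← neg_neg R, ← intervalIntegral.integral_comp_neg, neg_neg]
  refine intervalIntegral.integral_congr fun v _ => ?_
  push_cast
  rw [← neg_div_neg_eq]
  ring_nf

/-- The principal-value Fourier integral `(1/π) ∫_ℝ e^{i(s-t)v}/(u+iv) dv` equals
    `-2 e^{u(t-s)}` if `u < 0` and `s < t`, equals `2 e^{u(t-s)}` if `u > 0` and `t < s`,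
    and equals `0` in the remaining cases with `u ≠ 0`, `s ≠ t`. -/
theorem fourier_cauchy_kernel (u s t : ℝ) (hu : u ≠ 0) (hst : s ≠ t) :
    Tendsto
      (fun R : ℝ => (1 / (Real.pi : ℂ)) *
        ∫ v in (-R)..R, Complex.exp (Complex.I * ((s : ℂ) - t) * v) / ((u : ℂ) + Complex.I * v))
      atTop
      (nhds (if u < 0 ∧ s < t then (-2 * Real.exp (u * (t - s)) : ℂ)
        else if 0 < u ∧ t < s then (2 * Real.exp (u * (t - s)) : ℂ) else 0)) := by
  have hst' : s - t ≠ 0 := sub_ne_zero.2 hst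
  simp_rw [← ofReal_sub]
  rcases hu.lt_or_gt with hneg | hpos
  · simp_rw [intervalIntegral_cexp_mul_div_ofReal_add_I_mul_neg u (s - t)]
    convert ((tendsto_intervalIntegral_cexp_mul_div_ofReal_add_I_mul (neg_pos.2 hneg)
      (neg_ne_zero.2 hst')).neg.const_mul (1 / (π : ℂ))) using 2
    rcases hst.lt_or_gt with h | h
    · simp [hneg, h]
      field_simp
    · simp [hneg.not_gt, h.not_gt]
  · convert (tendsto_intervalIntegral_cexp_mul_div_ofReal_add_I_mul hpos hst').const_mul
      (1 / (π : ℂ)) using 2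
    rcases hst.lt_or_gt with h | h
    · simp [hpos.not_gt, h.not_gt]
    · simp [hpos, h, hpos.not_gt]
      field_simp
      congr 1
      ring
end

section
/- Suppose f : (0,∞) → [0,∞) is Borel measurable, and there exists a constant c such that for almost every t with f(t) ≠ 0, ∫₀^t f(s) s^{-(α+1)} Γ(α+1) ds = t + c. Then f(t) = Γ(α+1)^{-1} t^{α+1} · 1_E(t) almost everywhere for some measurable E ⊆ (0,∞), and E is (up to null sets) connected, i.e., an interval. -/
/-!
Write `g s = f s * s ^ (-(α + 1)) * Γ(α + 1)` and `F x = ∫₀ˣ g`, and let `A` be the set of `t > 0`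
with `g` integrable on `(0, t]` and `F t = t + c`. Almost every `t` with `f t ≠ 0` lies in `A`, so
`g` vanishes a.e. off `A`. For `p < q` in `A`, `F` is continuous on `[p, q]`, equals `x + c` on `A`
and is constant across every gap of `A`; since the right end of a gap is a limit of points of `A`,
a continuous induction along `[p, q]` gives `F x = x + c` on all of `[p, q]`. Differentiating,
`g = 1` a.e. on the open hull `J` of `A`, and `A \ J` has at most two points, so `E = J` works.
-/

open MeasureTheory Set Filter

theorem ae_imp_of_mem_biUnion_isOpen {α ι : Type*} [TopologicalSpace α]
    [SecondCountableTopology α] [MeasurableSpace α] {μ : Measure α} {P : α → Prop}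
    {I : Set ι} {s : ι → Set α} (hs : ∀ i ∈ I, IsOpen (s i))
    (h : ∀ i ∈ I, ∀ᵐ x ∂μ, x ∈ s i → P x) : ∀ᵐ x ∂μ, x ∈ ⋃ i ∈ I, s i → P x := by
  obtain ⟨T, hTI, hT, hTU⟩ := TopologicalSpace.isOpen_biUnion_countable I s hs
  rw [← hTU]
  filter_upwards [(ae_ball_iff hT).2 fun i hi => h i (hTI hi)] with x hx hxT
  obtain ⟨i, hi, hxi⟩ := mem_iUnion₂.1 hxT
  exact hx i hi hxi

theorem eqOn_add_const_of_disjoint_gaps {F : ℝ → ℝ} {A : Set ℝ} {p q c : ℝ}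
    (hF : ContinuousOn F (Icc p q)) (hp : p ∈ A) (hq : q ∈ A) (hA : ∀ a ∈ A, F a = a + c)
    (hgap : ∀ u ∈ Icc p q, ∀ v ∈ Icc p q, u < v → Disjoint (Ioo u v) A → F u = F v) :
    EqOn F (· + c) (Icc p q) := by
  set Z := {x | F x = x + c}
  have hZ : IsClosed (Z ∩ Icc p q) := by
    have hZ0 : Z = (fun x => F x - (x + c)) ⁻¹' {0} := by ext x; simp [Z, sub_eq_zero]
    rw [inter_comm, hZ0]
    exact (hF.sub (continuousOn_id.add continuousOn_const)).preimage_isClosed_of_isClosed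
      isClosed_Icc isClosed_singleton
  refine hZ.Icc_subset_of_forall_exists_gt (hA p hp) ?_
  rintro x ⟨hxZ, hpx, hxq⟩ y hxy
  set S := A ∩ Ioc x q
  have hSne : S.Nonempty := ⟨q, hq, hxq, le_rfl⟩
  have hSbdd : BddBelow S := ⟨x, fun a ha => ha.2.1.le⟩
  by_cases hv : sInf S < y
  · obtain ⟨a, haS, hay⟩ := exists_lt_of_csInf_lt hSne hv
    exact ⟨a, hA a haS.1, haS.2.1, hay.le⟩
  set v := sInf S
  have hxv : x < v := hxy.trans_le (not_lt.1 hv)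
  have hvq : v ≤ q := csInf_le hSbdd ⟨hq, hxq, le_rfl⟩
  have hvZ : v ∈ Z := by
    have hSZ : S ⊆ Z ∩ Icc p q := fun a ha => ⟨hA a ha.1, hpx.trans ha.2.1.le, ha.2.2⟩
    exact (hZ.closure_subset_iff.2 hSZ (csInf_mem_closure hSne hSbdd)).1
  have hdisj : Disjoint (Ioo x v) A := by
    refine disjoint_left.2 fun a ha haA => ?_
    exact (csInf_le hSbdd ⟨haA, ha.1, (ha.2.trans_le hvq).le⟩).not_gt ha.2
  have := hgap x ⟨hpx, hxq.le⟩ v ⟨hpx.trans hxv.le, hvq⟩ hxv hdisj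
  simp only [Z, mem_ofPred_eq] at hxZ hvZ
  linarith

theorem ae_eq_one_of_primitive_eqOn {g : ℝ → ℝ} {b p q c : ℝ}
    (hg : IntervalIntegrable g volume b q) (hbp : b ≤ p)
    (h : EqOn (fun x => ∫ t in b..x, g t) (· + c) (Ioo p q)) :
    ∀ᵐ x, x ∈ Ioo p q → g x = 1 := by
  filter_upwards [hg.ae_hasDerivAt_integral] with x hx hxpq
  have hx' : x ∈ uIcc b q := by
    rw [uIcc_of_le (hbp.trans (hxpq.1.trans hxpq.2).le)]
    exact ⟨hbp.trans hxpq.1.le, hxpq.2.le⟩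
  have hline : HasDerivAt (fun x => ∫ t in b..x, g t) 1 x :=
    ((hasDerivAt_id x).add_const c).congr_of_eventuallyEq
      (eventually_of_mem (Ioo_mem_nhds hxpq.1 hxpq.2) h)
  exact (hx hx' b left_mem_uIcc).unique hline

def openHull (A : Set ℝ) : Set ℝ := ⋃ i ∈ A ×ˢ A, Ioo i.1 i.2

theorem isOpen_openHull (A : Set ℝ) : IsOpen (openHull A) :=
  isOpen_biUnion fun _ _ => isOpen_Ioo

theorem ordConnected_openHull (A : Set ℝ) : (openHull A).OrdConnected := by
  refine ⟨fun x hx y hy z hz => ?_⟩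
  simp only [openHull, mem_iUnion₂, mem_prod, Prod.exists] at hx hy ⊢
  obtain ⟨p, -, ⟨hp, -⟩, hpx, -⟩ := hx
  obtain ⟨-, q, ⟨-, hq⟩, -, hyq⟩ := hy
  exact ⟨p, q, ⟨hp, hq⟩, hpx.trans_le hz.1, hz.2.trans_lt hyq⟩

theorem openHull_subset {A s : Set ℝ} (hA : A ⊆ s) (hs : s.OrdConnected) : openHull A ⊆ s :=
  iUnion₂_subset fun _ hi => Ioo_subset_Icc_self.trans (hs.out (hA hi.1) (hA hi.2))

theorem measure_diff_openHull (μ : Measure ℝ) [NullSingletonClass μ] (A : Set ℝ) :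
    μ (A \ openHull A) = 0 := by
  have hsub : A \ openHull A ⊆ {x | IsLeast A x} ∪ {x | IsGreatest A x} := by
    rintro x ⟨hxA, hx⟩
    by_contra hne
    simp only [mem_union, mem_ofPred_eq, not_or] at hne
    obtain ⟨p, hp, hpx⟩ : ∃ p ∈ A, p < x := by simpa [IsLeast, lowerBounds, hxA] using hne.1
    obtain ⟨q, hq, hxq⟩ : ∃ q ∈ A, x < q := by simpa [IsGreatest, upperBounds, hxA] using hne.2
    exact hx (mem_iUnion₂.2 ⟨(p, q), ⟨hp, hq⟩, hpx, hxq⟩)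
  refine measure_mono_null hsub (measure_union_null ?_ ?_) <;>
    exact Subsingleton.measure_zero (fun x hx y hy => hx.unique hy) μ

section Primitive

variable {g : ℝ → ℝ} {A : Set ℝ} {b c : ℝ}

theorem intervalIntegral_eq_zero_of_disjoint
    (hzero : ∀ᵐ s ∂volume.restrict (Ioi b), s ∉ A → g s = 0) {u v : ℝ} (hbu : b ≤ u)
    (huv : u ≤ v) (hdisj : Disjoint (Ioo u v) A) : ∫ s in u..v, g s = 0 := by
  refine intervalIntegral.integral_zero_ae ?_
  filter_upwards [(ae_restrict_iff' measurableSet_Ioi).1 hzero, volume.ae_ne v] with s hs hsv hsuv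
  rw [uIoc_of_le huv] at hsuv
  have hs' : s ∈ Ioo u v := ⟨hsuv.1, hsuv.2.lt_of_ne hsv⟩
  exact hs (hbu.trans_lt hs'.1) (disjoint_left.1 hdisj hs')

theorem primitive_eqOn_add_const (hA0 : A ⊆ Ioi b)
    (hint : ∀ a ∈ A, IntervalIntegrable g volume b a) (hval : ∀ a ∈ A, ∫ s in b..a, g s = a + c)
    (hzero : ∀ᵐ s ∂volume.restrict (Ioi b), s ∉ A → g s = 0) {p q : ℝ} (hp : p ∈ A)
    (hq : q ∈ A) :
    EqOn (fun x => ∫ s in b..x, g s) (· + c) (Icc p q) := by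
  have hbp : b < p := hA0 hp
  have hsub : Icc p q ⊆ uIcc b q := fun x hx => by
    rw [uIcc_of_le (hbp.le.trans (hx.1.trans hx.2))]
    exact ⟨hbp.le.trans hx.1, hx.2⟩
  have hint' : ∀ x ∈ Icc p q, IntervalIntegrable g volume b x := fun x hx =>
    (hint q hq).mono_set (uIcc_subset_uIcc left_mem_uIcc (hsub hx))
  refine eqOn_add_const_of_disjoint_gaps ((intervalIntegral.continuousOn_primitive_interval'
    (hint q hq) left_mem_uIcc).mono hsub) hp hq hval fun u hu v hv huv hdisj => ?_
  rw [← intervalIntegral.integral_add_adjacent_intervals (hint' u hu)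
      ((hint' u hu).symm.trans (hint' v hv)),
    intervalIntegral_eq_zero_of_disjoint hzero (hbp.le.trans hu.1) huv.le hdisj, add_zero]

theorem ae_eq_one_on_openHull (hA0 : A ⊆ Ioi b)
    (hint : ∀ a ∈ A, IntervalIntegrable g volume b a) (hval : ∀ a ∈ A, ∫ s in b..a, g s = a + c)
    (hzero : ∀ᵐ s ∂volume.restrict (Ioi b), s ∉ A → g s = 0) :
    ∀ᵐ s, s ∈ openHull A → g s = 1 :=
  ae_imp_of_mem_biUnion_isOpen (fun _ _ => isOpen_Ioo) fun i hi =>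
    ae_eq_one_of_primitive_eqOn (hint i.2 hi.2) (hA0 hi.1).le
      ((primitive_eqOn_add_const hA0 hint hval hzero hi.1 hi.2).mono Ioo_subset_Icc_self)

end Primitive

theorem eq_of_mul_rpow_neg_mul_eq_one {x t e γ : ℝ} (ht : 0 < t)
    (h : x * t ^ (-e) * γ = 1) : x = γ⁻¹ * t ^ e := by
  have hγ : γ ≠ 0 := by rintro rfl; simp at h
  have hte : t ^ e ≠ 0 := (Real.rpow_pos_of_pos ht e).ne'
  rw [Real.rpow_neg ht.le] at h
  field_simp at h ⊢
  linarith

theorem ward_functional_equation_solution_general (α : ℝ) (f : ℝ → ℝ)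
    (hfe : ∃ c : ℝ, ∀ᵐ t ∂(volume.restrict (Set.Ioi (0 : ℝ))), f t ≠ 0 →
      (∫ s in Set.Ioc (0 : ℝ) t, f s * s ^ (-(α + 1)) * Real.Gamma (α + 1)) = t + c) :
    ∃ E : Set ℝ, MeasurableSet E ∧ E ⊆ Set.Ioi 0 ∧
      (∀ᵐ t ∂(volume.restrict (Set.Ioi (0 : ℝ))),
        f t = (Real.Gamma (α + 1))⁻¹ * t ^ (α + 1) * E.indicator (fun _ => (1 : ℝ)) t) ∧
      ∃ I : Set ℝ, I.OrdConnected ∧ volume (symmDiff E I) = 0 := by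
  obtain ⟨c, hc⟩ := hfe
  set g : ℝ → ℝ := fun s => f s * s ^ (-(α + 1)) * Real.Gamma (α + 1)
  set A : Set ℝ := {t | 0 < t ∧ IntervalIntegrable g volume 0 t ∧ ∫ s in 0..t, g s = t + c}
  -- Where `g` is not integrable the integral is `0`, which can only equal `t + c` at `t = -c`.
  have hfA : ∀ᵐ t ∂volume.restrict (Ioi 0), f t ≠ 0 → t ∈ A := by
    filter_upwards [hc, ae_restrict_mem measurableSet_Ioi, ae_restrict_of_ae (volume.ae_ne (-c))]
      with t hct ht htc hft
    have hval : ∫ s in 0..t, g s = t + c := by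
      rw [intervalIntegral.integral_of_le ht.le]; exact hct hft
    refine ⟨ht, ?_, hval⟩
    by_contra hni
    rw [intervalIntegral.integral_undef hni] at hval
    exact htc (by linarith)
  have hzero : ∀ᵐ s ∂volume.restrict (Ioi 0), s ∉ A → g s = 0 :=
    hfA.mono fun s hs hsA => by simp [g, not_imp_comm.1 hs hsA]
  have hg1 := ae_eq_one_on_openHull (fun t ht => ht.1) (fun t ht => ht.2.1) (fun t ht => ht.2.2)
    hzero
  refine ⟨openHull A, (isOpen_openHull A).measurableSet, openHull_subset (fun t ht => ht.1)
    ordConnected_Ioi, ?_, openHull A, ordConnected_openHull A, by simp⟩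
  filter_upwards [hfA, ae_restrict_of_ae hg1, ae_restrict_mem measurableSet_Ioi,
    ae_restrict_of_ae (measure_eq_zero_iff_ae_notMem.1 (measure_diff_openHull volume A))]
    with t hft hgt ht hbd
  by_cases htJ : t ∈ openHull A
  · rw [indicator_of_mem htJ, mul_one]
    exact eq_of_mul_rpow_neg_mul_eq_one ht (hgt htJ)
  · rw [indicator_of_notMem htJ, mul_zero]
    by_contra hf0
    exact hbd ⟨hft hf0, htJ⟩

/-- If a nonnegative Borel `f` on `(0,∞)` satisfies, for some constant `c` and a.e. `t`
    with `f(t) ≠ 0`, the identity `∫₀^t f(s) s^{-(α+1)} Γ(α+1) ds = t + c`, then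
    `f(t) = Γ(α+1)⁻¹ t^{α+1} 1_E(t)` a.e. for some measurable `E ⊆ (0,∞)` which is
    connected (an interval) up to null sets. -/
theorem ward_functional_equation_solution (α : ℝ) (hα : -1 < α) (f : ℝ → ℝ)
    (hf : Measurable f) (hpos : ∀ t, 0 ≤ f t)
    (hfe : ∃ c : ℝ, ∀ᵐ t ∂(volume.restrict (Set.Ioi (0 : ℝ))), f t ≠ 0 →
      (∫ s in Set.Ioc (0 : ℝ) t, f s * s ^ (-(α + 1)) * Real.Gamma (α + 1)) = t + c) :
    ∃ E : Set ℝ, MeasurableSet E ∧ E ⊆ Set.Ioi 0 ∧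
      (∀ᵐ t ∂(volume.restrict (Set.Ioi (0 : ℝ))),
        f t = (Real.Gamma (α + 1))⁻¹ * t ^ (α + 1) * E.indicator (fun _ => (1 : ℝ)) t) ∧
      ∃ I : Set ℝ, I.OrdConnected ∧ volume (symmDiff E I) = 0 :=
  ward_functional_equation_solution_general α f hfe
end

section
/- Let φ_α(ξ) = ∫₀^∞ s^α e^{-(s-ξ)²/2} ds for α > -1. Then for every M > 0 there is a constant C₁ = C₁(α) such that e^{-ξ²/2}/φ_α(ξ) ≤ C₁ (1 + M)^{α+1} uniformly for all ξ ≥ -M; in particular φ_α(ξ) ≥ c e^{-ξ²/2} (1+M)^{-(α+1)} for ξ ∈ [-M, ∞). -/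
open MeasureTheory

/-- `φ_α(ξ) = ∫₀^∞ s^α e^{-(s-ξ)²/2} ds`. -/
noncomputable def phiAlpha (α ξ : ℝ) : ℝ :=
  ∫ s in Set.Ioi (0 : ℝ), s ^ α * Real.exp (-((s - ξ) ^ 2 / 2))

lemma phiAlpha_integrableOn (α : ℝ) (hα : -1 < α) (ξ : ℝ) :
    IntegrableOn (fun s : ℝ => s ^ α * Real.exp (-((s - ξ) ^ 2 / 2))) (Set.Ioi 0) := by
  have hdom : IntegrableOn
      (fun s : ℝ => Real.exp (ξ ^ 2 / 2) * (s ^ α * Real.exp (-(1/4 : ℝ) * s ^ 2)))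
      (Set.Ioi 0) :=
    (integrableOn_rpow_mul_exp_neg_mul_sq (by norm_num) hα).const_mul _
  refine hdom.mono' ?_ ?_
  · apply ContinuousOn.aestronglyMeasurable ?_ measurableSet_Ioi
    refine ContinuousOn.mul ?_ (Continuous.continuousOn (by continuity))
    exact fun x hx => (Real.continuousAt_rpow_const x α (Or.inl (ne_of_gt hx))).continuousWithinAt
  · filter_upwards [ae_restrict_mem measurableSet_Ioi] with s hs
    have hs0 : (0:ℝ) < s := hs
    have h1 : (0:ℝ) ≤ s ^ α := Real.rpow_nonneg hs0.le α
    rw [Real.norm_eq_abs, abs_of_nonneg (by positivity)]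
    have hexp : Real.exp (-((s - ξ) ^ 2 / 2)) ≤
        Real.exp (ξ ^ 2 / 2) * Real.exp (-(1/4 : ℝ) * s ^ 2) := by
      rw [← Real.exp_add]
      apply Real.exp_le_exp.2
      nlinarith [sq_nonneg (s - 2 * ξ)]
    calc s ^ α * Real.exp (-((s - ξ) ^ 2 / 2))
        ≤ s ^ α * (Real.exp (ξ ^ 2 / 2) * Real.exp (-(1/4 : ℝ) * s ^ 2)) :=
          mul_le_mul_of_nonneg_left hexp h1
      _ = Real.exp (ξ ^ 2 / 2) * (s ^ α * Real.exp (-(1/4 : ℝ) * s ^ 2)) := by ring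

/-- Uniform lower bound on `φ_α` relative to `e^{-ξ²/2}`: there is `C₁ = C₁(α) > 0` such
    that for every `M > 0` and all `ξ ≥ -M`, `e^{-ξ²/2}/φ_α(ξ) ≤ C₁ (1+M)^{α+1}`; in
    particular `φ_α(ξ) ≥ C₁⁻¹ e^{-ξ²/2} (1+M)^{-(α+1)}` for `ξ ∈ [-M, ∞)`. -/
theorem phiAlpha_lower_bound (α : ℝ) (hα : -1 < α) :
    ∃ C₁ > 0, ∀ M : ℝ, 0 < M → ∀ ξ : ℝ, -M ≤ ξ →
      Real.exp (-(ξ ^ 2 / 2)) / phiAlpha α ξ ≤ C₁ * (1 + M) ^ (α + 1) ∧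
      C₁⁻¹ * Real.exp (-(ξ ^ 2 / 2)) * (1 + M) ^ (-(α + 1)) ≤ phiAlpha α ξ := by
  have hα1 : (0:ℝ) < α + 1 := by linarith
  refine ⟨(α + 1) * Real.exp (3/2), by positivity, ?_⟩
  intro M hM ξ hξ
  set b : ℝ := (1 + M)⁻¹ with hb
  have hM1 : (0:ℝ) < 1 + M := by linarith
  have hb0 : 0 < b := by positivity
  have hb1 : b ≤ 1 := by
    rw [hb, inv_le_one_iff₀]; right; linarith
  -- key lower bound
  have key : Real.exp (-(3/2) + -(ξ ^ 2 / 2)) * (b ^ (α + 1) / (α + 1)) ≤ phiAlpha α ξ := by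
    have hsub : Set.Ioc (0:ℝ) b ⊆ Set.Ioi 0 := Set.Ioc_subset_Ioi_self
    have hInt : IntegrableOn (fun s : ℝ => s ^ α * Real.exp (-((s - ξ) ^ 2 / 2)))
        (Set.Ioi 0) := phiAlpha_integrableOn α hα ξ
    have step1 : (∫ s in Set.Ioc (0:ℝ) b, s ^ α * Real.exp (-((s - ξ) ^ 2 / 2)))
        ≤ phiAlpha α ξ := by
      refine setIntegral_mono_set hInt ?_ (Filter.Eventually.of_forall hsub)
      filter_upwards [ae_restrict_mem measurableSet_Ioi] with s hs
      have : (0:ℝ) < s := hs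
      positivity
    have hconstInt : IntegrableOn (fun s : ℝ => s ^ α * Real.exp (-(3/2) + -(ξ ^ 2 / 2)))
        (Set.Ioc (0:ℝ) b) := by
      apply Integrable.mul_const
      rw [← IntegrableOn, ← Set.uIoc_of_le hb0.le, ← intervalIntegrable_iff]
      exact intervalIntegral.intervalIntegrable_rpow' hα
    have step2 : (∫ s in Set.Ioc (0:ℝ) b, s ^ α * Real.exp (-(3/2) + -(ξ ^ 2 / 2)))
        ≤ ∫ s in Set.Ioc (0:ℝ) b, s ^ α * Real.exp (-((s - ξ) ^ 2 / 2)) := by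
      refine setIntegral_mono_on hconstInt (hInt.mono_set hsub) measurableSet_Ioc ?_
      intro s hs
      have hs0 : (0:ℝ) < s := hs.1
      have hsb : s ≤ b := hs.2
      have hsM : s * M ≤ 1 := by
        have : s ≤ (1 + M)⁻¹ := hsb
        rw [le_inv_comm₀ hs0 hM1] at this
        have h2 := mul_le_mul_of_nonneg_left this hs0.le
        rw [mul_inv_cancel₀ (ne_of_gt hs0)] at h2
        nlinarith
      have hs1 : s ≤ 1 := hsb.trans hb1
      refine mul_le_mul_of_nonneg_left (Real.exp_le_exp.2 ?_) (Real.rpow_nonneg hs0.le α)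
      have hξM : -ξ ≤ M := by linarith
      nlinarith [mul_le_mul_of_nonneg_left hξM hs0.le]
    have hval : (∫ s in Set.Ioc (0:ℝ) b, s ^ α * Real.exp (-(3/2) + -(ξ ^ 2 / 2)))
        = Real.exp (-(3/2) + -(ξ ^ 2 / 2)) * (b ^ (α + 1) / (α + 1)) := by
      rw [integral_mul_const, ← intervalIntegral.integral_of_le hb0.le,
        integral_rpow (Or.inl hα)]
      rw [Real.zero_rpow (ne_of_gt hα1)]
      ring
    rw [← hval]
    exact step2.trans step1
  have hexp32 : Real.exp (-(3/2) + -(ξ ^ 2 / 2)) =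
      (Real.exp (3/2))⁻¹ * Real.exp (-(ξ ^ 2 / 2)) := by
    rw [Real.exp_add, Real.exp_neg]
  have hbrpow : b ^ (α + 1) = (1 + M) ^ (-(α + 1)) := by
    rw [hb, Real.rpow_neg hM1.le, ← Real.inv_rpow hM1.le]
  have lower : ((α + 1) * Real.exp (3/2))⁻¹ * Real.exp (-(ξ ^ 2 / 2)) * (1 + M) ^ (-(α + 1))
      ≤ phiAlpha α ξ := by
    refine le_trans (le_of_eq ?_) key
    rw [hexp32, hbrpow, mul_inv]
    ring
  refine ⟨?_, lower⟩
  have hφpos : 0 < phiAlpha α ξ := by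
    refine lt_of_lt_of_le ?_ lower
    positivity
  rw [div_le_iff₀ hφpos]
  have hrpos : (0:ℝ) < (1 + M) ^ (α + 1) := Real.rpow_pos_of_pos hM1 _
  have hcancel : (1 + M) ^ (α + 1) * (1 + M) ^ (-(α + 1)) = 1 := by
    rw [← Real.rpow_add hM1, show α + 1 + -(α + 1) = 0 by ring, Real.rpow_zero]
  have hCne : ((α + 1) * Real.exp (3/2)) ≠ 0 := by positivity
  have h2 : Real.exp (-(ξ ^ 2 / 2)) = ((α + 1) * Real.exp (3/2)) * (1 + M) ^ (α + 1) *
      (((α + 1) * Real.exp (3/2))⁻¹ * Real.exp (-(ξ ^ 2 / 2)) * (1 + M) ^ (-(α + 1))) := by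
    have h1 : ((α + 1) * Real.exp (3/2)) * (1 + M) ^ (α + 1) *
        (((α + 1) * Real.exp (3/2))⁻¹ * Real.exp (-(ξ ^ 2 / 2)) * (1 + M) ^ (-(α + 1)))
        = Real.exp (-(ξ ^ 2 / 2)) * (((α + 1) * Real.exp (3/2)) * ((α + 1) * Real.exp (3/2))⁻¹)
          * ((1 + M) ^ (α + 1) * (1 + M) ^ (-(α + 1))) := by ring
    rw [h1, mul_inv_cancel₀ hCne, hcancel, mul_one, mul_one]
  calc Real.exp (-(ξ ^ 2 / 2))
      = ((α + 1) * Real.exp (3/2)) * (1 + M) ^ (α + 1) *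
        (((α + 1) * Real.exp (3/2))⁻¹ * Real.exp (-(ξ ^ 2 / 2)) * (1 + M) ^ (-(α + 1))) := h2
    _ ≤ ((α + 1) * Real.exp (3/2)) * (1 + M) ^ (α + 1) * phiAlpha α ξ :=
        mul_le_mul_of_nonneg_left lower (by positivity)
end
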